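/- Let J ≠ 0 and define on (0,π): ς₀(θ) = ln(4|J|) − ln(1+cos²θ), ω₀(θ) = −8J cosθ/(1+cos²θ), and η₀ = e^{ς₀} sin²θ. Then ∫₀^π ( (ς₀')² + 4ς₀ + (ω₀')²/η₀² ) sinθ dθ = 8(ln(2|J|)+1). -/

import Mathlib

open Real

private lemma hden (t : ℝ) : (0:ℝ) < 1 + Real.cos t ^ 2 := by positivity

private lemma hasDeriv_inner (t : ℝ) :
    HasDerivAt (fun x => 1 + Real.cos x ^ 2) (2 * Real.cos t * (-Real.sin t)) t := by
  have h := ((Real.hasDerivAt_cos t).pow 2).const_add 1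
  simpa using h

private lemma hasDeriv_log (t : ℝ) :
    HasDerivAt (fun x => Real.log (1 + Real.cos x ^ 2))
      (2 * Real.cos t * (-Real.sin t) / (1 + Real.cos t ^ 2)) t := by
  have h := (Real.hasDerivAt_log (hden t).ne').comp t (hasDeriv_inner t)
  simpa [div_eq_inv_mul, mul_comm, Function.comp_def] using h

private lemma deriv_sigma (c t : ℝ) :
    deriv (fun x => c - Real.log (1 + Real.cos x ^ 2)) t
      = -(2 * Real.cos t * (-Real.sin t) / (1 + Real.cos t ^ 2)) :=
  ((hasDeriv_log t).const_sub c).deriv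

private lemma deriv_omega (J t : ℝ) :
    deriv (fun x => -8 * J * Real.cos x / (1 + Real.cos x ^ 2)) t
      = (-8 * J * (-Real.sin t) * (1 + Real.cos t ^ 2)
          - (-8 * J * Real.cos t) * (2 * Real.cos t * (-Real.sin t)))
        / (1 + Real.cos t ^ 2) ^ 2 := by
  have h := (((Real.hasDerivAt_cos t).const_mul (-8 * J)).div (hasDeriv_inner t) (hden t).ne')
  simpa [mul_comm, mul_assoc, Pi.div_def] using h.deriv

/-- The mass functional of extreme Kerr throat initial data equals 8(ln(2|J|)+1). -/
theorem extreme_kerr_throat_mass (J : ℝ) (hJ : J ≠ 0) :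
    (∫ θ in (0:ℝ)..π,
      ((deriv (fun t => Real.log (4 * |J|) - Real.log (1 + Real.cos t ^ 2)) θ) ^ 2
        + 4 * (Real.log (4 * |J|) - Real.log (1 + Real.cos θ ^ 2))
        + (deriv (fun t => -8 * J * Real.cos t / (1 + Real.cos t ^ 2)) θ) ^ 2
          / (Real.exp (Real.log (4 * |J|) - Real.log (1 + Real.cos θ ^ 2))
              * Real.sin θ ^ 2) ^ 2)
      * Real.sin θ)
    = 8 * (Real.log (2 * |J|) + 1) := by
  have hJ4 : (0:ℝ) < 4 * |J| := by positivity
  set c := Real.log (4 * |J|) with hc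
  set g : ℝ → ℝ := fun t =>
    (4 * (1 - Real.cos t ^ 2) / (1 + Real.cos t ^ 2) + 4 * c
      - 4 * Real.log (1 + Real.cos t ^ 2)) * Real.sin t with hg
  have heq : Set.EqOn (fun θ =>
      ((deriv (fun t => Real.log (4 * |J|) - Real.log (1 + Real.cos t ^ 2)) θ) ^ 2
        + 4 * (Real.log (4 * |J|) - Real.log (1 + Real.cos θ ^ 2))
        + (deriv (fun t => -8 * J * Real.cos t / (1 + Real.cos t ^ 2)) θ) ^ 2
          / (Real.exp (Real.log (4 * |J|) - Real.log (1 + Real.cos θ ^ 2))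
              * Real.sin θ ^ 2) ^ 2)
      * Real.sin θ) g (Set.uIcc (0:ℝ) π) := by
    intro θ _
    rcases eq_or_ne (Real.sin θ) 0 with hs | hs
    · simp [hg, hs]
    · have hd := hden θ
      have hsc : Real.sin θ ^ 2 = 1 - Real.cos θ ^ 2 := by
        have := Real.sin_sq_add_cos_sq θ; linarith
      have hJa : |J| ≠ 0 := abs_ne_zero.mpr hJ
      have haJ : |J| ^ 2 = J ^ 2 := sq_abs J
      have hexp : Real.exp (c - Real.log (1 + Real.cos θ ^ 2))
          = 4 * |J| / (1 + Real.cos θ ^ 2) := by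
        rw [Real.exp_sub, hc, Real.exp_log hJ4, Real.exp_log hd]
      have hnum : deriv (fun t => -8 * J * Real.cos t / (1 + Real.cos t ^ 2)) θ
          = 8 * J * Real.sin θ ^ 3 / (1 + Real.cos θ ^ 2) ^ 2 := by
        rw [deriv_omega, div_eq_div_iff (by positivity) (by positivity)]
        linear_combination (-8 * J * Real.sin θ * (1 + Real.cos θ ^ 2) ^ 2) * hsc
      have h3 : (8 * J * Real.sin θ ^ 3 / (1 + Real.cos θ ^ 2) ^ 2) ^ 2
          / ((4 * |J| / (1 + Real.cos θ ^ 2)) * Real.sin θ ^ 2) ^ 2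
          = 4 * Real.sin θ ^ 2 / (1 + Real.cos θ ^ 2) ^ 2 := by
        field_simp
        linear_combination (-64) * haJ
      simp only [← hc, deriv_sigma c θ, hnum, hexp, h3, hg]
      field_simp
      linear_combination (4 * (1 + Real.cos θ ^ 2)) * hsc
  rw [intervalIntegral.integral_congr heq]
  set G : ℝ → ℝ := fun t =>
    -(4 * Real.cos t * (1 + c - Real.log (1 + Real.cos t ^ 2))) with hG
  have hderiv : ∀ t ∈ Set.uIcc (0:ℝ) π, HasDerivAt G (g t) t := by
    intro t _
    have h1 : HasDerivAt (fun x => 4 * Real.cos x) (4 * (-Real.sin t)) t :=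
      (Real.hasDerivAt_cos t).const_mul 4
    have h2 : HasDerivAt (fun x => 1 + c - Real.log (1 + Real.cos x ^ 2))
        (-(2 * Real.cos t * (-Real.sin t) / (1 + Real.cos t ^ 2))) t :=
      (hasDeriv_log t).const_sub (1 + c)
    have h : HasDerivAt (fun x => -(4 * Real.cos x * (1 + c - Real.log (1 + Real.cos x ^ 2)))) _ t :=
      (h1.mul h2).neg
    convert h using 1
    have hd := (hden t).ne'
    have hsc : Real.sin t ^ 2 = 1 - Real.cos t ^ 2 := by
      have := Real.sin_sq_add_cos_sq t; linarith
    simp only [hg]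
    field_simp
    ring
  have hcont1 : Continuous fun t : ℝ => 1 + Real.cos t ^ 2 :=
    continuous_const.add (Real.continuous_cos.pow 2)
  have hint : IntervalIntegrable g MeasureTheory.volume 0 π := by
    apply Continuous.intervalIntegrable
    apply Continuous.mul _ Real.continuous_sin
    apply Continuous.sub
    · exact ((continuous_const.mul (continuous_const.sub (Real.continuous_cos.pow 2))).div
        hcont1 (fun t => (hden t).ne')).add continuous_const
    · exact continuous_const.mul (hcont1.log (fun t => (hden t).ne'))
  rw [intervalIntegral.integral_eq_sub_of_hasDerivAt hderiv hint]
  have hlog2 : Real.log (4 * |J|) = Real.log 2 + Real.log (2 * |J|) := by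
    rw [show (4:ℝ) * |J| = 2 * (2 * |J|) by ring, Real.log_mul two_ne_zero (by positivity)]
  simp only [hG, Real.cos_pi, Real.cos_zero]
  rw [hc, hlog2]
  norm_num
  ring
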